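/- Let p > 0 and let g : ℝ → ℂ be rapidly decreasing, i.e. for every N ≥ 1 there is C_N with |g(η)| ≤ C_N (1 + |η|)^{−N} for all η ∈ ℝ. Then ∑_{k∈ℤ∖{0}, |k−ξ| > √|ξ|} |k|^{−p} |g(ξ − k)| = o(|ξ|^{−p}) as |ξ| → ∞. -/

import Mathlib

open Filter Real Set
open scoped Topology

/-!
For `|k - ξ| > √|ξ|` and `k ≠ 0` we have `|k|^{-p} ≤ 1` and
`(1 + |k - ξ|)^{-N} ≤ (1 + √|ξ|)^{-(N-2)} (1 + |k - ξ|)^{-2}`, while `∑_k (1 + |k - ξ|)^{-2}`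
is bounded uniformly in `ξ` (compare with the same sum centred at the integer `round ξ`).
So the tail sum is `O(|ξ|^{-(N-2)/2})`, which is `o(|ξ|^{-p})` once `N > 2p + 2`.
-/

section ShiftedLatticeSums

variable {b : ℝ}

lemma summable_one_add_abs_int_rpow_neg (hb : 1 < b) :
    Summable fun m : ℤ => (1 + |(m : ℝ)|) ^ (-b) := by
  refine (summable_abs_int_rpow hb).of_norm_bounded_eventually ?_
  filter_upwards [(Set.finite_singleton (0 : ℤ)).compl_mem_cofinite] with m hm
  have hm : (0 : ℝ) < |(m : ℝ)| := by simpa using hm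
  rw [Real.norm_of_nonneg (by positivity)]
  exact Real.rpow_le_rpow_of_nonpos hm (by linarith) (by linarith)

lemma one_add_abs_int_sub_rpow_neg_le (hb : 0 ≤ b) (k : ℤ) (ξ : ℝ) :
    (1 + |(k : ℝ) - ξ|) ^ (-b) ≤ 2 ^ b * (1 + |((k - round ξ : ℤ) : ℝ)|) ^ (-b) := by
  have hround : |ξ - round ξ| ≤ 1 / 2 := abs_sub_round ξ
  have hle : 1 + |((k - round ξ : ℤ) : ℝ)| ≤ 2 * (1 + |(k : ℝ) - ξ|) := by
    have := abs_add_le ((k : ℝ) - ξ) (ξ - round ξ)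
    push_cast
    rw [sub_add_sub_cancel] at this
    linarith [abs_nonneg ((k : ℝ) - ξ)]
  have hpos : 0 < 1 + |(k : ℝ) - ξ| := by positivity
  rw [Real.rpow_neg hpos.le, Real.rpow_neg (by positivity), ← div_eq_mul_inv]
  calc ((1 + |(k : ℝ) - ξ|) ^ b)⁻¹ = 2 ^ b / (2 * (1 + |(k : ℝ) - ξ|)) ^ b := by
        rw [Real.mul_rpow zero_le_two hpos.le]
        field_simp
    _ ≤ 2 ^ b / (1 + |((k - round ξ : ℤ) : ℝ)|) ^ b := by
        gcongr

lemma summable_one_add_abs_int_sub_rpow_neg (hb : 1 < b) (ξ : ℝ) :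
    Summable fun k : ℤ => (1 + |(k : ℝ) - ξ|) ^ (-b) :=
  .of_nonneg_of_le (fun _ => by positivity) (one_add_abs_int_sub_rpow_neg_le (by linarith) · ξ)
    (((Equiv.subRight (round ξ)).summable_iff.mpr (summable_one_add_abs_int_rpow_neg hb)).mul_left _)

lemma tsum_one_add_abs_int_sub_rpow_neg_le (hb : 1 < b) (ξ : ℝ) :
    ∑' k : ℤ, (1 + |(k : ℝ) - ξ|) ^ (-b) ≤ 2 ^ b * ∑' m : ℤ, (1 + |(m : ℝ)|) ^ (-b) := by
  have hshift := (Equiv.subRight (round ξ)).summable_iff.mpr (summable_one_add_abs_int_rpow_neg hb)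
  calc ∑' k : ℤ, (1 + |(k : ℝ) - ξ|) ^ (-b)
      ≤ ∑' k : ℤ, 2 ^ b * (1 + |((k - round ξ : ℤ) : ℝ)|) ^ (-b) :=
        (summable_one_add_abs_int_sub_rpow_neg hb ξ).tsum_le_tsum
          (one_add_abs_int_sub_rpow_neg_le (by linarith) · ξ) (hshift.mul_left _)
    _ = 2 ^ b * ∑' m : ℤ, (1 + |(m : ℝ)|) ^ (-b) := by
        rw [tsum_mul_left]
        congr 1
        exact (Equiv.subRight (round ξ)).tsum_eq fun m : ℤ => (1 + |(m : ℝ)|) ^ (-b)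

end ShiftedLatticeSums

lemma one_add_rpow_neg_add_le {s t a b : ℝ} (hs : 0 ≤ s) (hst : s ≤ t) (ha : 0 ≤ a) :
    (1 + t) ^ (-(a + b)) ≤ (1 + s) ^ (-a) * (1 + t) ^ (-b) := by
  have ht : 0 < 1 + t := by linarith
  rw [neg_add, Real.rpow_add ht]
  exact mul_le_mul_of_nonneg_right
    (Real.rpow_le_rpow_of_nonpos (by linarith) (by linarith) (by linarith)) (by positivity)

lemma tendsto_abs_rpow_mul_one_add_sqrt_abs_rpow_neg {p a : ℝ} (ha : 0 ≤ a) (hpa : 2 * p < a) :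
    Tendsto (fun ξ : ℝ => |ξ| ^ p * (1 + √|ξ|) ^ (-a)) (cocompact ℝ) (𝓝 0) := by
  suffices Tendsto (fun t : ℝ => t ^ p * (1 + √t) ^ (-a)) atTop (𝓝 0) from
    this.comp tendsto_norm_cocompact_atTop
  refine squeeze_zero' ?_ ?_ (tendsto_rpow_neg_atTop (y := a / 2 - p) (by linarith))
  · filter_upwards [eventually_ge_atTop 0] with t ht
    positivity
  · filter_upwards [eventually_gt_atTop 0] with t ht
    calc t ^ p * (1 + √t) ^ (-a) ≤ t ^ p * (√t) ^ (-a) := by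
          refine mul_le_mul_of_nonneg_left ?_ (by positivity)
          exact Real.rpow_le_rpow_of_nonpos (Real.sqrt_pos.mpr ht) (by linarith) (by linarith)
      _ = t ^ (-(a / 2 - p)) := by
          rw [Real.sqrt_eq_rpow, ← Real.rpow_mul ht.le, ← Real.rpow_add ht]
          ring_nf

section TailSum

variable {p a b C : ℝ} {g : ℝ → ℂ}

lemma nonneg_of_norm_le_mul_one_add_abs_rpow {r : ℝ} (hC : ∀ η, ‖g η‖ ≤ C * (1 + |η|) ^ r) :
    0 ≤ C :=
  nonneg_of_mul_nonneg_left ((norm_nonneg _).trans (hC 0)) (by positivity)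

lemma tail_term_le (hp : 0 ≤ p) (ha : 0 ≤ a)
    (hC : ∀ η, ‖g η‖ ≤ C * (1 + |η|) ^ (-(a + b))) (ξ : ℝ) (k : ℤ) :
    (if k ≠ 0 ∧ √|ξ| < |(k : ℝ) - ξ| then |(k : ℝ)| ^ (-p) * ‖g (ξ - k)‖ else 0)
      ≤ C * (1 + √|ξ|) ^ (-a) * (1 + |(k : ℝ) - ξ|) ^ (-b) := by
  have hC0 : 0 ≤ C := nonneg_of_norm_le_mul_one_add_abs_rpow hC
  split_ifs with h
  · obtain ⟨hk0, hfar⟩ := h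
    have hk : |(k : ℝ)| ^ (-p) ≤ 1 :=
      Real.rpow_le_one_of_one_le_of_nonpos (by exact_mod_cast Int.one_le_abs hk0) (by linarith)
    calc |(k : ℝ)| ^ (-p) * ‖g (ξ - k)‖ ≤ 1 * (C * (1 + |(k : ℝ) - ξ|) ^ (-(a + b))) := by
          rw [← abs_sub_comm]
          exact mul_le_mul hk (hC _) (norm_nonneg _) zero_le_one
      _ ≤ C * (1 + √|ξ|) ^ (-a) * (1 + |(k : ℝ) - ξ|) ^ (-b) := by
          rw [one_mul, mul_assoc]
          exact mul_le_mul_of_nonneg_left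
            (one_add_rpow_neg_add_le (Real.sqrt_nonneg _) hfar.le ha) hC0
  · positivity

lemma tail_sum_le (hp : 0 ≤ p) (ha : 0 ≤ a) (hb : 1 < b)
    (hC : ∀ η, ‖g η‖ ≤ C * (1 + |η|) ^ (-(a + b))) (ξ : ℝ) :
    ∑' k : ℤ, (if k ≠ 0 ∧ √|ξ| < |(k : ℝ) - ξ| then |(k : ℝ)| ^ (-p) * ‖g (ξ - k)‖ else 0)
      ≤ C * (2 ^ b * ∑' m : ℤ, (1 + |(m : ℝ)|) ^ (-b)) * (1 + √|ξ|) ^ (-a) := by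
  have hC0 : 0 ≤ C := nonneg_of_norm_le_mul_one_add_abs_rpow hC
  have hmaj := (summable_one_add_abs_int_sub_rpow_neg hb ξ).mul_left (C * (1 + √|ξ|) ^ (-a))
  calc _ ≤ ∑' k : ℤ, C * (1 + √|ξ|) ^ (-a) * (1 + |(k : ℝ) - ξ|) ^ (-b) :=
        Summable.tsum_le_tsum (tail_term_le hp ha hC ξ)
          (.of_nonneg_of_le (fun _ => by split_ifs <;> positivity) (tail_term_le hp ha hC ξ) hmaj)
          hmaj
    _ ≤ C * (1 + √|ξ|) ^ (-a) * (2 ^ b * ∑' m : ℤ, (1 + |(m : ℝ)|) ^ (-b)) := by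
        rw [tsum_mul_left]
        gcongr
        exact tsum_one_add_abs_int_sub_rpow_neg_le hb ξ
    _ = _ := by ring

end TailSum

/-- **The far-off-diagonal part of the sum is negligible** (Hong, Lifshits, Nazarov,
the estimate `Σ₂ = o(|ξ|^{-p})` in the proof of (2.10)).

If `g : ℝ → ℂ` is rapidly decreasing, then for `p > 0`,
`∑_{k ∈ ℤ∖{0}, |k - ξ| > √|ξ|} |k| ^ (-p) * ‖g (ξ - k)‖ = o(|ξ| ^ (-p))` as
`|ξ| → ∞` (i.e. along the cocompact filter on `ℝ`). -/
theorem tail_sum_rapidly_decreasing_negligible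
    (p : ℝ) (hp : 0 < p) (g : ℝ → ℂ)
    (hg : ∀ N : ℕ, 1 ≤ N → ∃ C : ℝ, ∀ η : ℝ, ‖g η‖ ≤ C * (1 + |η|) ^ (-(N : ℝ))) :
    Tendsto
      (fun ξ : ℝ => |ξ| ^ p *
        ∑' k : ℤ,
          if k ≠ 0 ∧ Real.sqrt |ξ| < |(k : ℝ) - ξ|
            then |(k : ℝ)| ^ (-p) * ‖g (ξ - k)‖ else 0)
      (Filter.cocompact ℝ) (𝓝 0) := by
  obtain ⟨N, hN⟩ := exists_nat_gt (2 * p + 2)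
  obtain ⟨C, hC⟩ := hg N (by exact_mod_cast (by linarith : (1 : ℝ) ≤ N))
  have hC' : ∀ η, ‖g η‖ ≤ C * (1 + |η|) ^ (-(((N : ℝ) - 2) + 2)) := by simpa using hC
  set K := C * (2 ^ (2 : ℝ) * ∑' m : ℤ, (1 + |(m : ℝ)|) ^ (-(2 : ℝ)))
  have hlim := (tendsto_abs_rpow_mul_one_add_sqrt_abs_rpow_neg (a := (N : ℝ) - 2) (by linarith)
    (by linarith)).const_mul K
  rw [mul_zero] at hlim
  refine squeeze_zero (fun ξ => ?_) (fun ξ => ?_) hlim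
  · exact mul_nonneg (by positivity) (tsum_nonneg fun k => by split_ifs <;> positivity)
  · rw [mul_left_comm]
    exact mul_le_mul_of_nonneg_left (tail_sum_le hp.le (by linarith) one_lt_two hC' ξ)
      (by positivity)
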